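/- Let S be a regular semigroup with finitely many left and right ideals, so that J = D in S. Then the number of J-classes of S is finite, and if S has at least two J-classes with maximal J-class J_M, then T = S \ J_M is a regular subsemigroup of S that is an ideal, and T has strictly fewer J-classes than S. -/

import Mathlib

/-- Green's R relation on a semigroup: `x R y ↔ xS¹ = yS¹`. -/
def GreenR {S : Type*} [Semigroup S] (x y : S) : Prop :=
  (y = x ∨ ∃ u, y = x * u) ∧ (x = y ∨ ∃ v, x = y * v)

/-- Green's L relation on a semigroup: `x L y ↔ S¹x = S¹y`. -/
def GreenL {S : Type*} [Semigroup S] (x y : S) : Prop :=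
  (y = x ∨ ∃ u, y = u * x) ∧ (x = y ∨ ∃ v, x = v * y)

/-- The J preorder: `JPre x y ↔ S¹xS¹ ⊆ S¹yS¹`, i.e. `x ∈ S¹yS¹`. -/
def JPre {S : Type*} [Semigroup S] (x y : S) : Prop :=
  x = y ∨ (∃ a, x = a * y) ∨ (∃ b, x = y * b) ∨ (∃ a b, x = a * y * b)

/-- Green's J relation. -/
def GreenJ {S : Type*} [Semigroup S] (x y : S) : Prop := JPre x y ∧ JPre y x

/-- Green's D relation: `D = R ∘ L`. -/
def GreenD {S : Type*} [Semigroup S] (x y : S) : Prop :=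
  ∃ z, GreenR x z ∧ GreenL z y

/-!
`JPre x y` says `x ∈ S¹yS¹`, which makes it a preorder. A J-class is determined by the principal
left ideal of any of its elements, so finitely many left ideals give finitely many J-classes.
If `m` is J-maximal and `u ≤_J t` with `t ∉ J_m`, then `u ∉ J_m`, since `m ≤_J u` would force
`t ∈ J_m` by maximality; hence `S \ J_m` is an ideal, and it contains the inverse `yty ≤_J t`
of each of its elements `t = tyt`. The class `J_m` is lost on passing to `S \ J_m`.
-/

section Green

variable {S : Type*} [Semigroup S]

theorem jPre_iff_exists_withOne {x y : S} :
    JPre x y ↔ ∃ a b : WithOne S, (x : WithOne S) = a * y * b := by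
  constructor
  · rintro (rfl | ⟨a, rfl⟩ | ⟨b, rfl⟩ | ⟨a, b, rfl⟩)
    · exact ⟨1, 1, by simp⟩
    · exact ⟨a, 1, by simp⟩
    · exact ⟨1, b, by simp⟩
    · exact ⟨a, b, by simp⟩
  · rintro ⟨a, b, h⟩
    induction a using WithOne.recOneCoe <;> induction b using WithOne.recOneCoe <;>
      simp only [one_mul, mul_one, ← WithOne.coe_mul, WithOne.coe_inj] at h
    case one.one => exact Or.inl h
    case one.coe b => exact Or.inr (Or.inr (Or.inl ⟨b, h⟩))
    case coe.one a => exact Or.inr (Or.inl ⟨a, h⟩)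
    case coe.coe a b => exact Or.inr (Or.inr (Or.inr ⟨a, b, h⟩))

theorem JPre.refl (x : S) : JPre x x := Or.inl rfl

theorem JPre.trans {x y z : S} (hxy : JPre x y) (hyz : JPre y z) : JPre x z := by
  obtain ⟨a, b, hx⟩ := jPre_iff_exists_withOne.1 hxy
  obtain ⟨c, d, hy⟩ := jPre_iff_exists_withOne.1 hyz
  exact jPre_iff_exists_withOne.2 ⟨a * c, d * b, by rw [hx, hy]; simp only [mul_assoc]⟩

theorem JPre.mul_mul (a x b : S) : JPre (a * x * b) x := Or.inr (Or.inr (Or.inr ⟨a, b, rfl⟩))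

theorem JPre.mul_left (s x : S) : JPre (s * x) x := Or.inr (Or.inl ⟨s, rfl⟩)

theorem JPre.mul_right (x s : S) : JPre (x * s) x := Or.inr (Or.inr (Or.inl ⟨s, rfl⟩))

theorem greenJ_equivalence : Equivalence (GreenJ (S := S)) where
  refl x := ⟨JPre.refl x, JPre.refl x⟩
  symm h := ⟨h.2, h.1⟩
  trans h₁ h₂ := ⟨h₁.1.trans h₂.1, h₂.2.trans h₁.2⟩

theorem jClass_eq_of_greenJ {x y : S} (h : GreenJ x y) : {z | GreenJ x z} = {z | GreenJ y z} :=
  Set.ext fun _ =>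
    ⟨greenJ_equivalence.trans (greenJ_equivalence.symm h), greenJ_equivalence.trans h⟩

def principalLeftIdeal (x : S) : Set S := {y | y = x ∨ ∃ u, y = u * x}

theorem mem_principalLeftIdeal_self (x : S) : x ∈ principalLeftIdeal x := Or.inl rfl

theorem jPre_of_mem_principalLeftIdeal {x y : S} (h : x ∈ principalLeftIdeal y) : JPre x y :=
  h.imp id Or.inl

theorem jClass_eq_of_principalLeftIdeal_eq {x y : S}
    (h : principalLeftIdeal x = principalLeftIdeal y) : {z | GreenJ x z} = {z | GreenJ y z} :=
  jClass_eq_of_greenJ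
    ⟨jPre_of_mem_principalLeftIdeal (h ▸ mem_principalLeftIdeal_self x),
      jPre_of_mem_principalLeftIdeal (h.symm ▸ mem_principalLeftIdeal_self y)⟩

theorem principalLeftIdeal_mem_leftIdeals (x : S) :
    principalLeftIdeal x ∈ {L : Set S | L.Nonempty ∧ ∀ s : S, ∀ x ∈ L, s * x ∈ L} := by
  refine ⟨⟨x, mem_principalLeftIdeal_self x⟩, fun s y hy => Or.inr ?_⟩
  rcases hy with rfl | ⟨u, rfl⟩
  · exact ⟨s, rfl⟩
  · exact ⟨s * u, (mul_assoc s u x).symm⟩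

theorem finite_range_of_factorsThrough {α β γ : Type*} [Nonempty γ] {f : α → β}
    {g : α → γ}
    (hf : (Set.range f).Finite) (hg : g.FactorsThrough f) : (Set.range g).Finite := by
  refine (hf.image (Function.extend f g Classical.ofNonempty)).subset ?_
  rintro _ ⟨a, rfl⟩
  exact ⟨f a, ⟨a, rfl⟩, hg.extend_apply _ a⟩

theorem finite_range_jClass_of_finite_leftIdeals
    (hLfin : {L : Set S | L.Nonempty ∧ ∀ s : S, ∀ x ∈ L, s * x ∈ L}.Finite) :
    (Set.range fun x : S => {y | GreenJ x y}).Finite :=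
  finite_range_of_factorsThrough
    (hLfin.subset (Set.range_subset_iff.2 principalLeftIdeal_mem_leftIdeals))
    fun _ _ => jClass_eq_of_principalLeftIdeal_eq

theorem not_greenJ_of_jPre_of_not_greenJ {m t u : S} (hmax : ∀ x : S, JPre m x → JPre x m)
    (ht : ¬ GreenJ m t) (hut : JPre u t) : ¬ GreenJ m u := fun hmu =>
  have hmt : JPre m t := hmu.1.trans hut
  ht ⟨hmt, hmax t hmt⟩

theorem mul_mul_mul_mul_eq_self_of_mul_mul_eq_self {t y : S} (hy : t * y * t = t) :
    t * (y * t * y) * t = t := by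
  calc t * (y * t * y) * t = t * y * t * y * t := by simp only [mul_assoc]
    _ = t := by rw [hy, hy]

theorem ncard_jClasses_not_greenJ_lt (m : S)
    (hfin : (Set.range fun x : S => {y | GreenJ x y}).Finite) :
    Set.ncard {C : Set S | ∃ x : S, ¬ GreenJ m x ∧ C = {y | GreenJ x y}} <
      Set.ncard {C : Set S | ∃ x : S, C = {y | GreenJ x y}} := by
  have hrange : {C : Set S | ∃ x : S, C = {y | GreenJ x y}} =
      Set.range fun x : S => {y | GreenJ x y} := by
    ext C
    exact exists_congr fun _ => eq_comm
  rw [hrange]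
  refine Set.ncard_lt_ncard ((Set.ssubset_iff_of_subset ?_).2 ⟨_, ⟨m, rfl⟩, ?_⟩) hfin
  · rintro _ ⟨x, -, rfl⟩
    exact ⟨x, rfl⟩
  · rintro ⟨x, hx, hclass⟩
    have hxm : m ∈ {y | GreenJ x y} := hclass ▸ greenJ_equivalence.refl m
    exact hx (greenJ_equivalence.symm hxm)

end Green

theorem regular_complement_of_maximal_Jclass_general {S : Type*} [Semigroup S]
    (hreg : ∀ x : S, ∃ y : S, x * y * x = x)
    (hLfin : {L : Set S | L.Nonempty ∧ ∀ s : S, ∀ x ∈ L, s * x ∈ L}.Finite) :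
    (Set.range fun x : S => {y | GreenJ x y}).Finite ∧
    ∀ m : S, (∀ x : S, JPre m x → JPre x m) → (∃ x : S, ¬ GreenJ m x) →
      (∀ t : S, ¬ GreenJ m t → ∀ s : S, ¬ GreenJ m (s * t) ∧ ¬ GreenJ m (t * s)) ∧
      (∀ t : S, ¬ GreenJ m t → ∃ y : S, ¬ GreenJ m y ∧ t * y * t = t) ∧
      Set.ncard {C : Set S | ∃ x : S, ¬ GreenJ m x ∧ C = {y | GreenJ x y}} <
        Set.ncard {C : Set S | ∃ x : S, C = {y | GreenJ x y}} := by
  have hfin := finite_range_jClass_of_finite_leftIdeals hLfin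
  refine ⟨hfin, fun m hmax _ => ⟨?_, ?_, ?_⟩⟩
  · exact fun t ht s => ⟨not_greenJ_of_jPre_of_not_greenJ hmax ht (.mul_left s t),
      not_greenJ_of_jPre_of_not_greenJ hmax ht (.mul_right t s)⟩
  · intro t ht
    obtain ⟨y, hy⟩ := hreg t
    exact ⟨y * t * y, not_greenJ_of_jPre_of_not_greenJ hmax ht (.mul_mul y t y),
      mul_mul_mul_mul_eq_self_of_mul_mul_eq_self hy⟩
  · exact ncard_jClasses_not_greenJ_lt m hfin

/-- A regular semigroup `S` with finitely many left and right
ideals (so `J = D`) has finitely many J-classes; and if `S` has at least two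
J-classes and `J_M` is a maximal J-class, then `T = S \ J_M` is a regular
ideal of `S` with strictly fewer J-classes than `S`. -/
theorem regular_complement_of_maximal_Jclass {S : Type*} [Semigroup S]
    (hreg : ∀ x : S, ∃ y : S, x * y * x = x)
    (hLfin : {L : Set S | L.Nonempty ∧ ∀ s : S, ∀ x ∈ L, s * x ∈ L}.Finite)
    (hRfin : {R : Set S | R.Nonempty ∧ ∀ s : S, ∀ x ∈ R, x * s ∈ R}.Finite)
    (hJD : ∀ x y : S, GreenJ x y ↔ GreenD x y) :
    (Set.range fun x : S => {y | GreenJ x y}).Finite ∧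
    ∀ m : S, (∀ x : S, JPre m x → JPre x m) → (∃ x : S, ¬ GreenJ m x) →
      (∀ t : S, ¬ GreenJ m t → ∀ s : S, ¬ GreenJ m (s * t) ∧ ¬ GreenJ m (t * s)) ∧
      (∀ t : S, ¬ GreenJ m t → ∃ y : S, ¬ GreenJ m y ∧ t * y * t = t) ∧
      Set.ncard {C : Set S | ∃ x : S, ¬ GreenJ m x ∧ C = {y | GreenJ x y}} <
        Set.ncard {C : Set S | ∃ x : S, C = {y | GreenJ x y}} :=
  regular_complement_of_maximal_Jclass_general hreg hLfin
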